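/- Let n ≥ 0, let σ ∈ ℤ^{n+1} be a changemaker, and let s ∈ E8 satisfy ⟨s, s⟩ = 2 (i.e., s is a root). Then τ = (s, σ) ∈ E8 ⊕ ℤ^{n+1} is an E8-changemaker. -/
import Mathlib


/-! Common definitions: the E8 lattice, ℤ^m, changemakers, E8-changemakers,
linear lattices Λ(p,q) via Hirzebruch–Jung continued fractions, and
lattice-isomorphism predicates for orthogonal complements. -/

/-- Vectors in `ℤ^m`. -/
abbrev Zvec (m : ℕ) := Fin m → ℤ

/-- The standard inner product on `ℤ^m`. -/
def zdot {m : ℕ} (x y : Zvec m) : ℤ := ∑ i, x i * y i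

/-- Coordinates of an element of the E8 lattice with respect to the
basis of simple roots `e_1, …, e_8`. -/
abbrev E8v := Fin 8 → ℤ

/-- The Gram matrix of the simple roots of the (positive definite) E8 lattice. -/
def E8gram : Matrix (Fin 8) (Fin 8) ℤ :=
  !![2,-1,-1,0,-1,0,0,0;
     -1,2,0,0,0,0,0,0;
     -1,0,2,-1,0,0,0,0;
     0,0,-1,2,0,0,0,0;
     -1,0,0,0,2,-1,0,0;
     0,0,0,0,-1,2,-1,0;
     0,0,0,0,0,-1,2,-1;
     0,0,0,0,0,0,-1,2]

/-- The inner product on the E8 lattice. -/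
def e8inner (x y : E8v) : ℤ := ∑ i, ∑ j, x i * E8gram i j * y j

/-- `sStar s i = ⟨s, e_{i+1}⟩`, i.e. `sStar s 0` is `s*_1`, …, `sStar s 7` is `s*_8`. -/
def sStar (s : E8v) (i : Fin 8) : ℤ := ∑ j, E8gram i j * s j

/-- `s` lies in the fundamental Weyl chamber. -/
def InWeylChamber (s : E8v) : Prop := ∀ i, 0 ≤ sStar s i

/-- The tuple `(s*_1, …, s*_8)` as a function. -/
def starVec (s : E8v) : Fin 8 → ℤ := fun i => sStar s i

/-- A root of E8: a vector of norm 2. -/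
def IsRoot (R : E8v) : Prop := e8inner R R = 2

/-- The orthogonal direct sum `E8 ⊕ ℤ^m`. -/
abbrev EZ (m : ℕ) := E8v × Zvec m

/-- The inner product on `E8 ⊕ ℤ^m`. -/
def pinner {m : ℕ} (x y : EZ m) : ℤ := e8inner x.1 y.1 + zdot x.2 y.2

/-- All coordinates are `±1`. -/
def IsSignVec {m : ℕ} (χ : Zvec m) : Prop := ∀ i, χ i = 1 ∨ χ i = -1

/-- `short(E8 ⊕ ℤ^m)`: the characteristic vectors of minimal norm `m`. -/
def shortSet (m : ℕ) : Set (EZ m) := {c | c.1 = 0 ∧ IsSignVec c.2}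

/-- `Short(E8 ⊕ ℤ^m)`: the characteristic vectors of norm `m + 8`. -/
def ShortSet (m : ℕ) : Set (EZ m) :=
  {c | (∃ R : E8v, IsRoot R ∧ c.1 = (2 : ℤ) • R ∧ IsSignVec c.2) ∨
       (c.1 = 0 ∧ ∃ i, (c.2 i = 3 ∨ c.2 i = -3) ∧
          ∀ j, j ≠ i → (c.2 j = 1 ∨ c.2 j = -1))}

/-- The set of pairings `⟨c, τ⟩` for `c ∈ short`. -/
def shortPairings {m : ℕ} (τ : EZ m) : Set ℤ := {j | ∃ c ∈ shortSet m, pinner c τ = j}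

/-- The set of pairings `⟨c, τ⟩` for `c ∈ Short`. -/
def ShortPairings {m : ℕ} (τ : EZ m) : Set ℤ := {j | ∃ c ∈ ShortSet m, pinner c τ = j}

/-- The parity interval `PI(a, b) = {a, a+2, …}∩[a,b]`. -/
def PI (a b : ℤ) : Set ℤ := {x | a ≤ x ∧ x ≤ b ∧ (x - a) % 2 = 0}

/-- `τ ∈ E8 ⊕ ℤ^m` is an E8-changemaker: with `cm = c(τ)` the maximum of the
short pairings and `CM = C(τ)` the maximum of the Short pairings, the short
pairings form the parity interval `PI(−c(τ), c(τ))` and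
`PI(c(τ)+2, C(τ))` is contained in the Short pairings. -/
def IsE8Changemaker {m : ℕ} (τ : EZ m) : Prop :=
  ∃ cm CM : ℤ,
    cm ∈ shortPairings τ ∧ (∀ j ∈ shortPairings τ, j ≤ cm) ∧
    CM ∈ ShortPairings τ ∧ (∀ j ∈ ShortPairings τ, j ≤ CM) ∧
    shortPairings τ = PI (-cm) cm ∧
    PI (cm + 2) CM ⊆ ShortPairings τ

/-- `|σ|₁` for a vector with nonnegative entries. -/
def onesum {m : ℕ} (σ : Zvec m) : ℤ := ∑ i, σ i

/-- A changemaker vector: `0 ≤ σ_0 ≤ … ≤ σ_{m-1}`, and each entry is at most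
one more than the sum of the preceding ones (for the first entry, `σ_0 ≤ 1`). -/
def IsChangemaker {m : ℕ} (σ : Zvec m) : Prop :=
  (∀ i, 0 ≤ σ i) ∧ (∀ i j : Fin m, i ≤ j → σ i ≤ σ j) ∧
  (∀ i : Fin m, σ i ≤ 1 + ∑ j ∈ Finset.univ.filter (fun j => j < i), σ j)

/-- Numerator/denominator of the Hirzebruch–Jung continued fraction
`[a_1, …, a_k]⁻ = a_1 − 1/(a_2 − 1/(⋯ − 1/a_k))`. -/
def hjPair : List ℤ → ℤ × ℤ
  | [] => (1, 0)
  | a :: rest => ((hjPair rest).1 * a - (hjPair rest).2, (hjPair rest).1)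

/-- The Gram matrix of the vertex basis of a linear lattice with diagonal `a`. -/
def linGram {k : ℕ} (a : Fin k → ℤ) : Matrix (Fin k) (Fin k) ℤ :=
  Matrix.of fun i j =>
    if i = j then a i
    else if (i : ℕ) + 1 = (j : ℕ) ∨ (j : ℕ) + 1 = (i : ℕ) then -1 else 0

/-- `B` is a basis of the orthogonal complement `(τ)^⊥ ⊂ E8 ⊕ ℤ^m`. -/
def IsPerpBasis {m k : ℕ} (τ : EZ m) (B : Fin k → EZ m) : Prop :=
  (∀ i, pinner (B i) τ = 0) ∧
  (∀ x : EZ m, pinner x τ = 0 → ∃ c : Fin k → ℤ, x = ∑ i, c i • B i) ∧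
  (∀ c : Fin k → ℤ, (∑ i, c i • B i) = 0 → c = 0)

/-- The Gram matrix of a family of vectors in `E8 ⊕ ℤ^m`. -/
def gramOf {m k : ℕ} (B : Fin k → EZ m) : Matrix (Fin k) (Fin k) ℤ :=
  Matrix.of fun i j => pinner (B i) (B j)

/-- The orthogonal complement `(τ)^⊥` is isomorphic to the lattice with Gram matrix `M`. -/
def ComplementIsomGram {m k : ℕ} (τ : EZ m) (M : Matrix (Fin k) (Fin k) ℤ) : Prop :=
  ∃ B : Fin k → EZ m, IsPerpBasis τ B ∧ gramOf B = M

/-- `(τ)^⊥` is isomorphic to the linear lattice `Λ(p,q)`. -/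
def ComplementIsomLinear {m : ℕ} (τ : EZ m) (p q : ℤ) : Prop :=
  ∃ (k : ℕ) (a : Fin k → ℤ), 0 < k ∧ (∀ i, 2 ≤ a i) ∧
    hjPair (List.ofFn a) = (p, q) ∧ ComplementIsomGram τ (linGram a)

/-- `M` is the Gram matrix of an orthogonal direct sum of linear lattices:
a tridiagonal matrix with diagonal entries `≥ 2` and off-diagonal entries in `{0, −1}`. -/
def IsSumLinearGram {k : ℕ} (M : Matrix (Fin k) (Fin k) ℤ) : Prop :=
  0 < k ∧ (∀ i, 2 ≤ M i i) ∧
  (∀ i j : Fin k, M i j = M j i) ∧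
  (∀ i j : Fin k, (i : ℕ) + 1 = (j : ℕ) → (M i j = 0 ∨ M i j = -1)) ∧
  (∀ i j : Fin k, (i : ℕ) + 1 < (j : ℕ) → M i j = 0)

/-- `(τ)^⊥` is isomorphic to an orthogonal direct sum of linear lattices. -/
def ComplementSumLinear {m : ℕ} (τ : EZ m) : Prop :=
  ∃ (k : ℕ) (M : Matrix (Fin k) (Fin k) ℤ), IsSumLinearGram M ∧ ComplementIsomGram τ M

/-! ### Auxiliary lemmas -/

section Aux

private lemma Eg_0_0 : E8gram 0 0 = 2 := rfl
private lemma Eg_0_1 : E8gram 0 1 = (-1) := rfl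
private lemma Eg_0_2 : E8gram 0 2 = (-1) := rfl
private lemma Eg_0_3 : E8gram 0 3 = 0 := rfl
private lemma Eg_0_4 : E8gram 0 4 = (-1) := rfl
private lemma Eg_0_5 : E8gram 0 5 = 0 := rfl
private lemma Eg_0_6 : E8gram 0 6 = 0 := rfl
private lemma Eg_0_7 : E8gram 0 7 = 0 := rfl
private lemma Eg_1_0 : E8gram 1 0 = (-1) := rfl
private lemma Eg_1_1 : E8gram 1 1 = 2 := rfl
private lemma Eg_1_2 : E8gram 1 2 = 0 := rfl
private lemma Eg_1_3 : E8gram 1 3 = 0 := rfl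
private lemma Eg_1_4 : E8gram 1 4 = 0 := rfl
private lemma Eg_1_5 : E8gram 1 5 = 0 := rfl
private lemma Eg_1_6 : E8gram 1 6 = 0 := rfl
private lemma Eg_1_7 : E8gram 1 7 = 0 := rfl
private lemma Eg_2_0 : E8gram 2 0 = (-1) := rfl
private lemma Eg_2_1 : E8gram 2 1 = 0 := rfl
private lemma Eg_2_2 : E8gram 2 2 = 2 := rfl
private lemma Eg_2_3 : E8gram 2 3 = (-1) := rfl
private lemma Eg_2_4 : E8gram 2 4 = 0 := rfl
private lemma Eg_2_5 : E8gram 2 5 = 0 := rfl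
private lemma Eg_2_6 : E8gram 2 6 = 0 := rfl
private lemma Eg_2_7 : E8gram 2 7 = 0 := rfl
private lemma Eg_3_0 : E8gram 3 0 = 0 := rfl
private lemma Eg_3_1 : E8gram 3 1 = 0 := rfl
private lemma Eg_3_2 : E8gram 3 2 = (-1) := rfl
private lemma Eg_3_3 : E8gram 3 3 = 2 := rfl
private lemma Eg_3_4 : E8gram 3 4 = 0 := rfl
private lemma Eg_3_5 : E8gram 3 5 = 0 := rfl
private lemma Eg_3_6 : E8gram 3 6 = 0 := rfl
private lemma Eg_3_7 : E8gram 3 7 = 0 := rfl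
private lemma Eg_4_0 : E8gram 4 0 = (-1) := rfl
private lemma Eg_4_1 : E8gram 4 1 = 0 := rfl
private lemma Eg_4_2 : E8gram 4 2 = 0 := rfl
private lemma Eg_4_3 : E8gram 4 3 = 0 := rfl
private lemma Eg_4_4 : E8gram 4 4 = 2 := rfl
private lemma Eg_4_5 : E8gram 4 5 = (-1) := rfl
private lemma Eg_4_6 : E8gram 4 6 = 0 := rfl
private lemma Eg_4_7 : E8gram 4 7 = 0 := rfl
private lemma Eg_5_0 : E8gram 5 0 = 0 := rfl
private lemma Eg_5_1 : E8gram 5 1 = 0 := rfl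
private lemma Eg_5_2 : E8gram 5 2 = 0 := rfl
private lemma Eg_5_3 : E8gram 5 3 = 0 := rfl
private lemma Eg_5_4 : E8gram 5 4 = (-1) := rfl
private lemma Eg_5_5 : E8gram 5 5 = 2 := rfl
private lemma Eg_5_6 : E8gram 5 6 = (-1) := rfl
private lemma Eg_5_7 : E8gram 5 7 = 0 := rfl
private lemma Eg_6_0 : E8gram 6 0 = 0 := rfl
private lemma Eg_6_1 : E8gram 6 1 = 0 := rfl
private lemma Eg_6_2 : E8gram 6 2 = 0 := rfl
private lemma Eg_6_3 : E8gram 6 3 = 0 := rfl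
private lemma Eg_6_4 : E8gram 6 4 = 0 := rfl
private lemma Eg_6_5 : E8gram 6 5 = (-1) := rfl
private lemma Eg_6_6 : E8gram 6 6 = 2 := rfl
private lemma Eg_6_7 : E8gram 6 7 = (-1) := rfl
private lemma Eg_7_0 : E8gram 7 0 = 0 := rfl
private lemma Eg_7_1 : E8gram 7 1 = 0 := rfl
private lemma Eg_7_2 : E8gram 7 2 = 0 := rfl
private lemma Eg_7_3 : E8gram 7 3 = 0 := rfl
private lemma Eg_7_4 : E8gram 7 4 = 0 := rfl
private lemma Eg_7_5 : E8gram 7 5 = 0 := rfl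
private lemma Eg_7_6 : E8gram 7 6 = (-1) := rfl
private lemma Eg_7_7 : E8gram 7 7 = 2 := rfl

private lemma e8inner_eval (x y : E8v) : e8inner x y =
    2*x 0*y 0 - x 0*y 1 - x 0*y 2 - x 0*y 4 - x 1*y 0 + 2*x 1*y 1 - x 2*y 0 + 2*x 2*y 2
    - x 2*y 3 - x 3*y 2 + 2*x 3*y 3 - x 4*y 0 + 2*x 4*y 4 - x 4*y 5 - x 5*y 4 + 2*x 5*y 5
    - x 5*y 6 - x 6*y 5 + 2*x 6*y 6 - x 6*y 7 - x 7*y 6 + 2*x 7*y 7 := by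
  simp only [e8inner, Fin.sum_univ_eight, Eg_0_0, Eg_0_1, Eg_0_2, Eg_0_3, Eg_0_4, Eg_0_5,
    Eg_0_6, Eg_0_7, Eg_1_0, Eg_1_1, Eg_1_2, Eg_1_3, Eg_1_4, Eg_1_5, Eg_1_6, Eg_1_7,
    Eg_2_0, Eg_2_1, Eg_2_2, Eg_2_3, Eg_2_4, Eg_2_5, Eg_2_6, Eg_2_7,
    Eg_3_0, Eg_3_1, Eg_3_2, Eg_3_3, Eg_3_4, Eg_3_5, Eg_3_6, Eg_3_7,
    Eg_4_0, Eg_4_1, Eg_4_2, Eg_4_3, Eg_4_4, Eg_4_5, Eg_4_6, Eg_4_7,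
    Eg_5_0, Eg_5_1, Eg_5_2, Eg_5_3, Eg_5_4, Eg_5_5, Eg_5_6, Eg_5_7,
    Eg_6_0, Eg_6_1, Eg_6_2, Eg_6_3, Eg_6_4, Eg_6_5, Eg_6_6, Eg_6_7,
    Eg_7_0, Eg_7_1, Eg_7_2, Eg_7_3, Eg_7_4, Eg_7_5, Eg_7_6, Eg_7_7]
  ring

private lemma e8_sos (x : E8v) : 60 * e8inner x x =
    30*(2*x 0 - x 1 - x 2 - x 4)^2 + 10*(3*x 1 - x 2 - x 4)^2 + 5*(4*x 2 - 3*x 3 - 2*x 4)^2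
    + 3*(5*x 3 - 2*x 4)^2 + 3*(4*x 4 - 5*x 5)^2 + 5*(3*x 5 - 4*x 6)^2 + 10*(2*x 6 - 3*x 7)^2
    + 30*(x 7)^2 := by
  rw [e8inner_eval]; ring

private lemma e8_nonneg (x : E8v) : 0 ≤ e8inner x x := by
  have hsos := e8_sos x
  have q1 := sq_nonneg (2*x 0 - x 1 - x 2 - x 4)
  have q2 := sq_nonneg (3*x 1 - x 2 - x 4)
  have q3 := sq_nonneg (4*x 2 - 3*x 3 - 2*x 4)
  have q4 := sq_nonneg (5*x 3 - 2*x 4)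
  have q5 := sq_nonneg (4*x 4 - 5*x 5)
  have q6 := sq_nonneg (3*x 5 - 4*x 6)
  have q7 := sq_nonneg (2*x 6 - 3*x 7)
  have q8 := sq_nonneg (x 7)
  linarith

private lemma e8_eq_zero {x : E8v} (h : e8inner x x = 0) : x = 0 := by
  have hsos := e8_sos x
  rw [h, mul_zero] at hsos
  have q1 := sq_nonneg (2*x 0 - x 1 - x 2 - x 4)
  have q2 := sq_nonneg (3*x 1 - x 2 - x 4)
  have q3 := sq_nonneg (4*x 2 - 3*x 3 - 2*x 4)
  have q4 := sq_nonneg (5*x 3 - 2*x 4)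
  have q5 := sq_nonneg (4*x 4 - 5*x 5)
  have q6 := sq_nonneg (3*x 5 - 4*x 6)
  have q7 := sq_nonneg (2*x 6 - 3*x 7)
  have q8 := sq_nonneg (x 7)
  have e1 : 2*x 0 - x 1 - x 2 - x 4 = 0 :=
    (pow_eq_zero_iff two_ne_zero).mp (le_antisymm (by linarith) q1)
  have e2 : 3*x 1 - x 2 - x 4 = 0 :=
    (pow_eq_zero_iff two_ne_zero).mp (le_antisymm (by linarith) q2)
  have e3 : 4*x 2 - 3*x 3 - 2*x 4 = 0 :=
    (pow_eq_zero_iff two_ne_zero).mp (le_antisymm (by linarith) q3)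
  have e4 : 5*x 3 - 2*x 4 = 0 :=
    (pow_eq_zero_iff two_ne_zero).mp (le_antisymm (by linarith) q4)
  have e5 : 4*x 4 - 5*x 5 = 0 :=
    (pow_eq_zero_iff two_ne_zero).mp (le_antisymm (by linarith) q5)
  have e6 : 3*x 5 - 4*x 6 = 0 :=
    (pow_eq_zero_iff two_ne_zero).mp (le_antisymm (by linarith) q6)
  have e7 : 2*x 6 - 3*x 7 = 0 :=
    (pow_eq_zero_iff two_ne_zero).mp (le_antisymm (by linarith) q7)
  have e8 : x 7 = 0 :=
    (pow_eq_zero_iff two_ne_zero).mp (le_antisymm (by linarith) q8)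
  clear hsos q1 q2 q3 q4 q5 q6 q7 q8 h
  have hx6 : x 6 = 0 := by omega
  have hx5 : x 5 = 0 := by omega
  have hx4 : x 4 = 0 := by omega
  have hx3 : x 3 = 0 := by omega
  have hx2 : x 2 = 0 := by omega
  have hx1 : x 1 = 0 := by omega
  have hx0 : x 0 = 0 := by omega
  funext i
  fin_cases i <;> simp only [Pi.zero_apply] <;> assumption

private lemma e8_symm (x y : E8v) : e8inner x y = e8inner y x := by
  rw [e8inner_eval, e8inner_eval]; ring

private lemma e8_sub_expand (x y : E8v) :
    e8inner (x - y) (x - y) = e8inner x x - 2 * e8inner x y + e8inner y y := by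
  simp only [e8inner_eval, Pi.sub_apply]; ring

private lemma e8_add_expand (x y : E8v) :
    e8inner (x + y) (x + y) = e8inner x x + 2 * e8inner x y + e8inner y y := by
  simp only [e8inner_eval, Pi.add_apply]; ring

private lemma e8_smul2 (x y : E8v) : e8inner ((2:ℤ) • x) y = 2 * e8inner x y := by
  simp only [e8inner_eval, Pi.smul_apply, smul_eq_mul]; ring

private lemma e8_neg_left (x y : E8v) : e8inner (-x) y = - e8inner x y := by
  simp only [e8inner_eval, Pi.neg_apply]; ring

private lemma e8_neg_neg (x y : E8v) : e8inner (-x) (-y) = e8inner x y := by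
  simp only [e8inner_eval, Pi.neg_apply]; ring

private lemma e8_zero_left (y : E8v) : e8inner 0 y = 0 := by
  simp only [e8inner_eval, Pi.zero_apply]; ring

private def delta (i : Fin 8) : E8v := fun j => if j = i then 1 else 0

private lemma e8inner_eq_sum_star (x y : E8v) : e8inner x y = ∑ i, x i * sStar y i := by
  simp only [e8inner, sStar, Finset.mul_sum]
  exact Finset.sum_congr rfl fun i _ => Finset.sum_congr rfl fun j _ => by ring

private lemma e8inner_delta (i : Fin 8) (y : E8v) : e8inner (delta i) y = sStar y i := by
  rw [e8inner_eq_sum_star]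
  simp [delta, ite_mul, one_mul, zero_mul]

private lemma sStar_delta (i j : Fin 8) : sStar (delta i) j = E8gram j i := by
  simp [sStar, delta, mul_ite, mul_one, mul_zero]

private lemma egii : ∀ i : Fin 8, E8gram i i = 2 := by decide

private lemma delta_norm (i : Fin 8) : e8inner (delta i) (delta i) = 2 := by
  rw [e8inner_delta, sStar_delta]; exact egii i

private def nb : Fin 8 → Fin 8 := ![1,0,0,2,0,4,5,6]

private lemma nb_adj : ∀ i, E8gram (nb i) i = -1 := by decide
private lemma nb_adj' : ∀ i, E8gram i (nb i) = -1 := by decide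

private lemma exists_root_one (s : E8v) (hs : e8inner s s = 2) :
    ∃ R : E8v, e8inner R R = 2 ∧ e8inner R s = 1 := by
  have hex : ∃ i, sStar s i ≠ 0 := by
    by_contra hc
    push_neg at hc
    have h0 : e8inner s s = 0 := by
      rw [e8inner_eq_sum_star]
      exact Finset.sum_eq_zero fun i _ => by rw [hc i, mul_zero]
    omega
  obtain ⟨i, hi⟩ := hex
  have hds : e8inner (delta i) s = sStar s i := e8inner_delta i s
  have hsd : e8inner s (delta i) = sStar s i := by rw [e8_symm]; exact hds
  have hdd : e8inner (delta i) (delta i) = 2 := delta_norm i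
  have hub : sStar s i ≤ 2 := by
    have h1 := e8_nonneg (s - delta i)
    rw [e8_sub_expand, hs, hsd, hdd] at h1; linarith
  have hlb : -2 ≤ sStar s i := by
    have h1 := e8_nonneg (s + delta i)
    rw [e8_add_expand, hs, hsd, hdd] at h1; linarith
  have hcases : sStar s i = -2 ∨ sStar s i = -1 ∨ sStar s i = 1 ∨ sStar s i = 2 := by omega
  rcases hcases with h | h | h | h
  · have hz : e8inner (s + delta i) (s + delta i) = 0 := by
      rw [e8_add_expand, hs, hsd, hdd, h]; ring
    have hseq : s = -delta i := eq_neg_of_add_eq_zero_left (e8_eq_zero hz)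
    refine ⟨delta (nb i), delta_norm _, ?_⟩
    rw [hseq, e8_symm, e8_neg_left, e8inner_delta, sStar_delta, nb_adj' i]
    ring
  · exact ⟨-delta i, by rw [e8_neg_neg]; exact hdd, by rw [e8_neg_left, hds, h]; ring⟩
  · exact ⟨delta i, hdd, by rw [hds, h]⟩
  · have hz : e8inner (s - delta i) (s - delta i) = 0 := by
      rw [e8_sub_expand, hs, hsd, hdd, h]; ring
    have hseq : s = delta i := sub_eq_zero.mp (e8_eq_zero hz)
    refine ⟨-delta (nb i), by rw [e8_neg_neg]; exact delta_norm _, ?_⟩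
    rw [hseq, e8_neg_left, e8inner_delta, sStar_delta, nb_adj i]
    ring

private lemma cm_sum (g : ℕ → ℤ) (h0 : ∀ k, 0 ≤ g k)
    (h2 : ∀ k, g k ≤ 1 + ∑ j ∈ Finset.range k, g j) :
    ∀ m : ℕ, ∀ u : ℤ, 0 ≤ u → u ≤ ∑ j ∈ Finset.range m, g j →
    ∃ χ : ℕ → ℤ, (∀ k, χ k = 0 ∨ χ k = 1) ∧ ∑ j ∈ Finset.range m, χ j * g j = u := by
  intro m
  induction m with
  | zero =>
    intro u hu1 hu2
    simp only [Finset.range_zero, Finset.sum_empty] at hu2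
    exact ⟨fun _ => 0, fun _ => Or.inl rfl, by simp; omega⟩
  | succ m ih =>
    intro u hu1 hu2
    rw [Finset.sum_range_succ] at hu2
    rcases le_or_gt u (∑ j ∈ Finset.range m, g j) with hle | hgt
    · obtain ⟨χ, hχ, hsum⟩ := ih u hu1 hle
      refine ⟨fun k => if k = m then 0 else χ k,
        fun k => by by_cases h : k = m <;> simp [h, hχ k], ?_⟩
      rw [Finset.sum_range_succ]
      beta_reduce
      rw [if_pos rfl, zero_mul, add_zero, ← hsum]
      exact Finset.sum_congr rfl fun j hj => by
        rw [if_neg (Nat.ne_of_lt (Finset.mem_range.mp hj))]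
    · have hb1 : (0:ℤ) ≤ u - g m := by have := h2 m; omega
      have hb2 : u - g m ≤ ∑ j ∈ Finset.range m, g j := by have := h0 m; omega
      obtain ⟨χ, hχ, hsum⟩ := ih (u - g m) hb1 hb2
      refine ⟨fun k => if k = m then 1 else χ k,
        fun k => by by_cases h : k = m <;> simp [h, hχ k], ?_⟩
      rw [Finset.sum_range_succ]
      beta_reduce
      rw [if_pos rfl, one_mul]
      have heq : ∑ j ∈ Finset.range m, (if j = m then (1:ℤ) else χ j) * g j = u - g m := by
        rw [← hsum]
        exact Finset.sum_congr rfl fun j hj => by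
          rw [if_neg (Nat.ne_of_lt (Finset.mem_range.mp hj))]
      omega

private lemma sum_range_pm (m : ℕ) (χ g : ℕ → ℤ) :
    ∑ k ∈ Finset.range m, (2 * χ k - 1) * g k
      = 2 * (∑ k ∈ Finset.range m, χ k * g k) - ∑ k ∈ Finset.range m, g k := by
  rw [Finset.mul_sum, ← Finset.sum_sub_distrib]
  exact Finset.sum_congr rfl fun k _ => by ring

end Aux

/-- if `σ` is a changemaker and `s` is a root of E8, then `(s, σ)` is an
E8-changemaker. -/
theorem stmt3 (n : ℕ) (σ : Zvec (n + 1)) (hσ : IsChangemaker σ)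
    (s : E8v) (hs : e8inner s s = 2) :
    IsE8Changemaker ((s, σ) : EZ (n + 1)) := by
  obtain ⟨hpos, hmono, hcmk⟩ := hσ
  -- extension of σ to ℕ
  set g : ℕ → ℤ := fun k => if h : k < n + 1 then σ ⟨k, h⟩ else 0 with hgdef
  have hg : ∀ i : Fin (n+1), σ i = g i.val := by
    intro i
    rw [hgdef]
    simp only
    rw [dif_pos i.isLt]
  have hg0 : ∀ k, 0 ≤ g k := by
    intro k
    by_cases h : k < n + 1
    · rw [hgdef]; simp only; rw [dif_pos h]; exact hpos _
    · rw [hgdef]; simp only; rw [dif_neg h]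
  have hgsum_nonneg : ∀ m : ℕ, 0 ≤ ∑ j ∈ Finset.range m, g j :=
    fun m => Finset.sum_nonneg fun j _ => hg0 j
  have hfilt : ∀ i : Fin (n+1),
      (∑ j ∈ Finset.univ.filter (fun j => j < i), σ j) = ∑ k ∈ Finset.range i.val, g k := by
    intro i
    calc ∑ j ∈ Finset.univ.filter (fun j => j < i), σ j
        = ∑ j : Fin (n+1), (if j.val < i.val then g j.val else 0) := by
          rw [Finset.sum_filter]
          refine Finset.sum_congr rfl fun j _ => ?_
          by_cases h : j < i
          · rw [if_pos h, if_pos (Fin.lt_def.mp h), hg j]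
          · rw [if_neg h, if_neg (fun hv => h (Fin.lt_def.mpr hv))]
      _ = ∑ k ∈ Finset.range (n+1), (if k < i.val then g k else 0) :=
          Fin.sum_univ_eq_sum_range (fun k => if k < i.val then g k else 0) (n+1)
      _ = ∑ k ∈ Finset.range i.val, g k := by
          have hfl : Finset.filter (fun k => k < i.val) (Finset.range (n+1))
              = Finset.range i.val := by
            ext k
            simp only [Finset.mem_filter, Finset.mem_range]
            have hi := i.isLt
            omega
          rw [← Finset.sum_filter, hfl]
  have hg2 : ∀ k, g k ≤ 1 + ∑ j ∈ Finset.range k, g j := by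
    intro k
    by_cases h : k < n + 1
    · have hc := hcmk ⟨k, h⟩
      rw [hfilt ⟨k, h⟩] at hc
      calc g k = σ ⟨k, h⟩ := (hg ⟨k, h⟩).symm
        _ ≤ _ := hc
    · have hz : g k = 0 := by rw [hgdef]; simp only; rw [dif_neg h]
      rw [hz]
      have := hgsum_nonneg k
      omega
  set S : ℤ := ∑ j ∈ Finset.range (n+1), g j with hS
  set S' : ℤ := ∑ j ∈ Finset.range n, g j with hS'
  have hSfin : ∑ i : Fin (n+1), σ i = S := by
    rw [hS, ← Fin.sum_univ_eq_sum_range g (n+1)]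
    exact Finset.sum_congr rfl fun i _ => hg i
  have hgn_le : ∀ i : Fin (n+1), σ i ≤ g n := by
    intro i
    have h := hmono i (Fin.last n) (Fin.le_last i)
    rw [hg (Fin.last n)] at h
    exact h
  have hgn0 : 0 ≤ g n := hg0 n
  have hSn : S = S' + g n := by rw [hS, hS', Finset.sum_range_succ]
  have hS'0 : 0 ≤ S' := hgsum_nonneg n
  have hglast : g n ≤ 1 + S' := hg2 n
  have hpin : ∀ c : EZ (n+1), pinner c ((s, σ) : EZ (n+1))
      = e8inner c.1 s + ∑ i, c.2 i * σ i := fun c => rfl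
  -- bound for sign-vector sums
  have sign_le : ∀ χ : Zvec (n+1), IsSignVec χ → ∑ i, χ i * σ i ≤ S := by
    intro χ hχ
    rw [← hSfin]
    refine Finset.sum_le_sum fun i _ => ?_
    rcases hχ i with h | h
    · rw [h, one_mul]
    · rw [h]; have := hpos i; linarith
  have sign_ge : ∀ χ : Zvec (n+1), IsSignVec χ → -S ≤ ∑ i, χ i * σ i := by
    intro χ hχ
    rw [← hSfin, ← Finset.sum_neg_distrib]
    refine Finset.sum_le_sum fun i _ => ?_
    rcases hχ i with h | h
    · rw [h, one_mul]; have := hpos i; linarith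
    · rw [h]; linarith
  have short_mem : ∀ j ∈ shortPairings ((s, σ) : EZ (n+1)),
      -S ≤ j ∧ j ≤ S ∧ 2 ∣ (j + S) := by
    rintro j ⟨c, ⟨hc1, hc2⟩, rfl⟩
    rw [hpin c, hc1, e8_zero_left, zero_add]
    refine ⟨sign_ge _ hc2, sign_le _ hc2, ?_⟩
    rw [← hSfin, ← Finset.sum_add_distrib]
    refine Finset.dvd_sum fun i _ => ?_
    rcases hc2 i with h | h
    · rw [h]; exact ⟨σ i, by ring⟩
    · rw [h]; exact ⟨0, by ring⟩
  -- sign-vector realization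
  have signsum : ∀ u : ℤ, 0 ≤ u → u ≤ S →
      ∃ χf : Zvec (n+1), IsSignVec χf ∧ ∑ i, χf i * σ i = 2*u - S := by
    intro u hu0 hu1
    obtain ⟨χ, hχ01, hχsum⟩ := cm_sum g hg0 hg2 (n+1) u hu0 (by rw [← hS]; exact hu1)
    refine ⟨fun i => 2 * χ i.val - 1, ?_, ?_⟩
    · intro i
      rcases hχ01 i.val with h | h
      · right; show 2 * χ i.val - 1 = -1; rw [h]; ring
      · left; show 2 * χ i.val - 1 = 1; rw [h]; ring
    · calc ∑ i : Fin (n+1), (2 * χ i.val - 1) * σ i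
          = ∑ i : Fin (n+1), (2 * χ i.val - 1) * g i.val :=
            Finset.sum_congr rfl fun i _ => by rw [hg i]
        _ = ∑ k ∈ Finset.range (n+1), (2 * χ k - 1) * g k :=
            Fin.sum_univ_eq_sum_range (fun k => (2 * χ k - 1) * g k) (n+1)
        _ = 2*u - S := by rw [sum_range_pm, hχsum, ← hS]
  -- sign-vector with a 3 at the last coordinate
  have threesum : ∀ u : ℤ, 0 ≤ u → u ≤ S' →
      ∃ χf : Zvec (n+1), χf (Fin.last n) = 3 ∧
        (∀ j, j ≠ Fin.last n → (χf j = 1 ∨ χf j = -1)) ∧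
        ∑ i, χf i * σ i = 3 * g n + (2*u - S') := by
    intro u hu0 hu1
    obtain ⟨χ, hχ01, hχsum⟩ := cm_sum g hg0 hg2 n u hu0 (by rw [← hS']; exact hu1)
    refine ⟨fun i => if i = Fin.last n then 3 else 2 * χ i.val - 1, if_pos rfl, ?_, ?_⟩
    · intro j hj
      show (if j = Fin.last n then 3 else 2 * χ j.val - 1) = 1 ∨
        (if j = Fin.last n then 3 else 2 * χ j.val - 1) = -1
      rw [if_neg hj]
      rcases hχ01 j.val with h | h
      · right; rw [h]; ring
      · left; rw [h]; ring
    · calc ∑ i : Fin (n+1), (if i = Fin.last n then 3 else 2 * χ i.val - 1) * σ i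
          = ∑ i : Fin (n+1), (if i.val = n then 3 else 2 * χ i.val - 1) * g i.val := by
            refine Finset.sum_congr rfl fun i _ => ?_
            by_cases h : i = Fin.last n
            · rw [if_pos h, if_pos (by rw [h]; rfl), hg i]
            · rw [if_neg h, if_neg (show ¬ (i.val = n) from fun hv => h (Fin.ext hv)), hg i]
        _ = ∑ k ∈ Finset.range (n+1), (if k = n then 3 else 2 * χ k - 1) * g k :=
            Fin.sum_univ_eq_sum_range (fun k => (if k = n then 3 else 2 * χ k - 1) * g k) (n+1)
        _ = 3 * g n + (2*u - S') := by
            rw [Finset.sum_range_succ, if_pos rfl]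
            have heq : ∑ k ∈ Finset.range n, (if k = n then (3:ℤ) else 2 * χ k - 1) * g k
                = ∑ k ∈ Finset.range n, (2 * χ k - 1) * g k :=
              Finset.sum_congr rfl fun k hk => by
                rw [if_neg (Nat.ne_of_lt (Finset.mem_range.mp hk))]
            rw [heq, sum_range_pm, hχsum, ← hS']
            ring
  refine ⟨S, max (S+4) (S + 2 * g n), ?_, ?_, ?_, ?_, ?_, ?_⟩
  · -- S ∈ shortPairings
    refine ⟨((0 : E8v), fun _ => 1), ⟨rfl, fun i => Or.inl rfl⟩, ?_⟩
    rw [hpin, e8_zero_left, zero_add]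
    simp only [one_mul]
    exact hSfin
  · -- upper bound for shortPairings
    intro j hj
    exact (short_mem j hj).2.1
  · -- CM ∈ ShortPairings
    rcases le_total (g n) 2 with h2n | h2n
    · have hCM : max (S+4) (S + 2 * g n) = S + 4 := max_eq_left (by linarith)
      rw [hCM]
      refine ⟨((2:ℤ) • s, fun _ => 1), Or.inl ⟨s, hs, rfl, fun i => Or.inl rfl⟩, ?_⟩
      rw [hpin, e8_smul2, hs]
      simp only [one_mul]
      rw [hSfin]; ring
    · have hCM : max (S+4) (S + 2 * g n) = S + 2 * g n := max_eq_right (by linarith)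
      rw [hCM]
      obtain ⟨χf, hlast, hrest, hsum⟩ := threesum S' hS'0 le_rfl
      refine ⟨((0 : E8v), χf), Or.inr ⟨rfl, Fin.last n, Or.inl hlast, hrest⟩, ?_⟩
      rw [hpin, e8_zero_left, zero_add, hsum]
      omega
  · -- upper bound for ShortPairings
    rintro j ⟨c, hc, rfl⟩
    rcases hc with ⟨R, hR, hc1, hc2⟩ | ⟨hc1, i0, hi0, hrest⟩
    · rw [hpin c, hc1, e8_smul2]
      have hR' : e8inner R R = 2 := hR
      have hRs : e8inner R s ≤ 2 := by
        have h1 := e8_nonneg (s - R)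
        rw [e8_sub_expand] at h1
        have h2 : e8inner s R = e8inner R s := e8_symm s R
        rw [hs, hR', h2] at h1
        linarith
      have hsum := sign_le c.2 hc2
      have hmx := le_max_left (S+4) (S + 2 * g n)
      linarith
    · rw [hpin c, hc1, e8_zero_left, zero_add]
      rw [← Finset.add_sum_erase _ _ (Finset.mem_univ i0)]
      have h1 : c.2 i0 * σ i0 ≤ 3 * σ i0 := by
        have := hpos i0
        rcases hi0 with h | h <;> rw [h] <;> linarith
      have h2 : ∑ i ∈ Finset.univ.erase i0, c.2 i * σ i
          ≤ ∑ i ∈ Finset.univ.erase i0, σ i := by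
        refine Finset.sum_le_sum fun i hi => ?_
        rcases hrest i (Finset.ne_of_mem_erase hi) with h | h
        · rw [h, one_mul]
        · rw [h]; have := hpos i; linarith
      have h3 : ∑ i ∈ Finset.univ.erase i0, σ i = (∑ i, σ i) - σ i0 := by
        rw [← Finset.add_sum_erase _ σ (Finset.mem_univ i0)]; ring
      have h4 : σ i0 ≤ g n := hgn_le i0
      have h5 : 0 ≤ σ i0 := hpos i0
      have hmx := le_max_right (S+4) (S + 2 * g n)
      rw [hSfin] at h3
      linarith
  · -- shortPairings = PI (-S) S
    ext x
    constructor
    · intro hx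
      obtain ⟨h1, h2, h3⟩ := short_mem x hx
      exact ⟨h1, h2, by omega⟩
    · rintro ⟨h1, h2, h3⟩
      have hx3 : 2 ∣ (x + S) := by omega
      obtain ⟨u, hu⟩ : ∃ u : ℤ, 2 * u = x + S := ⟨(x + S)/2, by omega⟩
      obtain ⟨χf, hsign, hsum⟩ := signsum u (by omega) (by omega)
      exact ⟨((0 : E8v), χf), ⟨rfl, hsign⟩,
        by rw [hpin, e8_zero_left, zero_add, hsum]; omega⟩
  · -- PI (S+2) CM ⊆ ShortPairings
    rintro x ⟨hx1, hx2, hx3⟩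
    by_cases hxle : x ≤ S + 2 * g n
    · obtain ⟨u, hu⟩ : ∃ u : ℤ, 2 * u = (x - 3 * g n) + S' := ⟨((x - 3*g n) + S')/2, by omega⟩
      have hu0 : 0 ≤ u := by omega
      have hu1 : u ≤ S' := by omega
      obtain ⟨χf, hlast, hrest, hsum⟩ := threesum u hu0 hu1
      refine ⟨((0 : E8v), χf), Or.inr ⟨rfl, Fin.last n, Or.inl hlast, hrest⟩, ?_⟩
      rw [hpin, e8_zero_left, zero_add, hsum]
      omega
    · push_neg at hxle
      have hx4 : x ≤ S + 4 := by
        rcases le_total (S+4) (S + 2 * g n) with h | h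
        · rw [max_eq_right h] at hx2; omega
        · rw [max_eq_left h] at hx2; exact hx2
      have hcases : x = S + 2 ∨ x = S + 4 := by omega
      rcases hcases with h | h
      · obtain ⟨R, hRR, hRs⟩ := exists_root_one s hs
        refine ⟨((2:ℤ) • R, fun _ => 1), Or.inl ⟨R, hRR, rfl, fun i => Or.inl rfl⟩, ?_⟩
        rw [hpin, e8_smul2, hRs]
        simp only [one_mul]
        rw [hSfin]; omega
      · refine ⟨((2:ℤ) • s, fun _ => 1), Or.inl ⟨s, hs, rfl, fun i => Or.inl rfl⟩, ?_⟩
        rw [hpin, e8_smul2, hs]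
        simp only [one_mul]
        rw [hSfin]; omega
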